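/- arXiv:2604.09258 — 5 statements merged into one kernel-verified Lean document; each statement's English description precedes it below -/
import Mathlib

section
/- Let (Ω, ℱ, ℙ) be a probability space and let X₁, …, X_K, Y : Ω → ℝ^d be mutually independent, identically distributed random vectors with finite second moment, common mean μ = 𝔼[X_k] = 𝔼[Y], and common variance σ² = 𝔼[‖X_k − μ‖₂²] = 𝔼[‖Y − μ‖₂²]. Let a > 0, let C_train ∈ ℝ, and set X̄ = (1/K)·Σ_{k=1}^K X_k and c = C_train − (a/(2K))·Σ_{k=1}^K ‖X̄ − X_k‖₂² (a random variable chosen so that the averaged training loss at X̄ equals C_train). Then the expected downstream loss satisfies 𝔼[(a/2)·‖X̄ − Y‖₂² + c] = C_train + (a/K)·σ². -/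
open MeasureTheory ProbabilityTheory
open scoped ProbabilityTheory RealInnerProductSpace

section AuxLemmas
lemma aux_integrable_inner {Ω : Type*} [MeasureSpace Ω]
    {E : Type*} [NormedAddCommGroup E] [InnerProductSpace ℝ E]
    {f g : Ω → E} (hf : MemLp f 2) (hg : MemLp g 2) :
    Integrable (fun ω => ⟪f ω, g ω⟫) := by
  have h := L2.integrable_inner (𝕜 := ℝ) (hf.toLp f) (hg.toLp g)
  refine h.congr ?_
  filter_upwards [hf.coeFn_toLp, hg.coeFn_toLp] with ω h1 h2
  rw [h1, h2]

lemma aux_indep_integral_inner {Ω : Type*} [MeasureSpace Ω] [IsProbabilityMeasure (ℙ : Measure Ω)]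
    {d : ℕ} {f g : Ω → EuclideanSpace ℝ (Fin d)}
    (hf : MemLp f 2) (hg : MemLp g 2) (h : IndepFun f g) :
    ∫ ω, ⟪f ω, g ω⟫ = ⟪∫ ω, f ω, ∫ ω, g ω⟫ := by
  have hfi : Integrable f := hf.integrable one_le_two
  have hgi : Integrable g := hg.integrable one_le_two
  have hcf : ∀ i, MemLp (fun ω => f ω i) 2 := fun i =>
    (EuclideanSpace.proj (𝕜 := ℝ) i).comp_memLp' hf
  have hcg : ∀ i, MemLp (fun ω => g ω i) 2 := fun i =>
    (EuclideanSpace.proj (𝕜 := ℝ) i).comp_memLp' hg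
  simp_rw [PiLp.inner_apply, RCLike.inner_apply, conj_trivial]
  rw [integral_finset_sum _ (fun i _ => by
    have := aux_integrable_inner (hcf i) (hcg i)
    refine this.congr ?_
    filter_upwards with ω
    simp [RCLike.inner_apply])]
  refine Finset.sum_congr rfl fun i _ => ?_
  have hm : Measurable fun v : EuclideanSpace ℝ (Fin d) => v i :=
    (EuclideanSpace.proj (𝕜 := ℝ) i).continuous.measurable
  have hind : IndepFun (fun ω => f ω i) (fun ω => g ω i) := h.comp hm hm
  have hmul := hind.symm.integral_mul_eq_mul_integral ((hcg i).integrable one_le_two).aestronglyMeasurable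
    ((hcf i).integrable one_le_two).aestronglyMeasurable
  rw [show ((fun ω => g ω i) * fun ω => f ω i) = fun ω => g ω i * f ω i from rfl] at hmul
  rw [hmul]
  have h1 := (EuclideanSpace.proj (𝕜 := ℝ) i).integral_comp_comm hfi
  have h2 := (EuclideanSpace.proj (𝕜 := ℝ) i).integral_comp_comm hgi
  simp only [PiLp.proj_apply] at h1 h2
  rw [← h1, ← h2]

lemma aux_pointwise {E : Type*} [NormedAddCommGroup E] [InnerProductSpace ℝ E]
    {K : ℕ} (hK : 0 < K) (x : Fin K → E) (y μ : E) (a Ctrain : ℝ) :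
    (a / 2) * ‖(K : ℝ)⁻¹ • (∑ k, x k) - y‖ ^ 2
      + (Ctrain - (a / (2 * K)) * ∑ k, ‖(K : ℝ)⁻¹ • (∑ j, x j) - x k‖ ^ 2)
    = Ctrain + (a * ((K : ℝ)⁻¹) ^ 2) * (∑ i, ∑ j, ⟪x i - μ, x j - μ⟫)
        - (a / K) * (∑ k, ⟪x k - μ, y - μ⟫)
        + (a / 2) * ⟪y - μ, y - μ⟫
        - (a / (2 * K)) * (∑ k, ⟪x k - μ, x k - μ⟫) := by
  have hK0 : (K : ℝ) ≠ 0 := Nat.cast_ne_zero.mpr hK.ne'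
  set S : E := ∑ k, (x k - μ) with hS
  have hsum : (K : ℝ)⁻¹ • (∑ k, x k) = (K : ℝ)⁻¹ • S + μ := by
    have h1 : ∑ k, x k = S + (K : ℝ) • μ := by
      rw [hS, Finset.sum_sub_distrib, Finset.sum_const, Finset.card_univ, Fintype.card_fin,
        ← Nat.cast_smul_eq_nsmul ℝ]
      abel
    rw [h1, smul_add, smul_smul, inv_mul_cancel₀ hK0, one_smul]
  have hSS : ⟪S, S⟫ = ∑ i, ∑ j, ⟪x i - μ, x j - μ⟫ := by
    rw [hS, sum_inner]
    exact Finset.sum_congr rfl fun i _ => inner_sum _ _ _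
  have hSy : ⟪S, y - μ⟫ = ∑ k, ⟪x k - μ, y - μ⟫ := by rw [hS, sum_inner]
  have hB2 : ‖(K : ℝ)⁻¹ • S‖ ^ 2 = ((K : ℝ)⁻¹) ^ 2 * ⟪S, S⟫ := by
    rw [norm_smul, mul_pow, real_inner_self_eq_norm_sq, Real.norm_eq_abs, sq_abs]
  have e1 : ‖(K : ℝ)⁻¹ • (∑ k, x k) - y‖ ^ 2
      = ((K : ℝ)⁻¹) ^ 2 * ⟪S, S⟫ - 2 * ((K : ℝ)⁻¹ * ⟪S, y - μ⟫) + ⟪y - μ, y - μ⟫ := by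
    have hxy : (K : ℝ)⁻¹ • (∑ k, x k) - y = (K : ℝ)⁻¹ • S - (y - μ) := by rw [hsum]; abel
    rw [hxy, norm_sub_sq_real, hB2, real_inner_smul_left, ← real_inner_self_eq_norm_sq]
  have e2 : ∀ k, ‖(K : ℝ)⁻¹ • (∑ j, x j) - x k‖ ^ 2
      = ((K : ℝ)⁻¹) ^ 2 * ⟪S, S⟫ - 2 * ((K : ℝ)⁻¹ * ⟪S, x k - μ⟫) + ⟪x k - μ, x k - μ⟫ := by
    intro k
    have hxk : (K : ℝ)⁻¹ • (∑ j, x j) - x k = (K : ℝ)⁻¹ • S - (x k - μ) := by rw [hsum]; abel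
    rw [hxk, norm_sub_sq_real, hB2, real_inner_smul_left, ← real_inner_self_eq_norm_sq]
  have e3 : ∑ k, ‖(K : ℝ)⁻¹ • (∑ j, x j) - x k‖ ^ 2
      = (K : ℝ) * (((K : ℝ)⁻¹) ^ 2 * ⟪S, S⟫) - 2 * ((K : ℝ)⁻¹ * ⟪S, S⟫)
        + ∑ k, ⟪x k - μ, x k - μ⟫ := by
    simp_rw [e2]
    rw [Finset.sum_add_distrib, Finset.sum_sub_distrib, Finset.sum_const, Finset.card_univ,
      Fintype.card_fin, nsmul_eq_mul]
    congr 1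
    rw [← Finset.mul_sum, ← Finset.mul_sum, ← inner_sum, ← hS]
  rw [e1, e3, hSS, hSy]
  field_simp
  ring

end AuxLemmas

/-- **Generalization of closeness in the quadratic case.** Task minimizers
`X 1, …, X K` and downstream minimizer `Y` are i.i.d. random vectors in `ℝ^d` with finite
second moment, mean `μ` and variance `σ²`. With `X̄ = (1/K) ∑ k X k` and the intrinsic
depth `c = C_train - (a/(2K)) ∑ k ‖X̄ - X k‖²` (chosen so that the averaged training loss
at `X̄` equals `C_train`), the expected downstream loss satisfies
`𝔼[(a/2)‖X̄ - Y‖² + c] = C_train + (a/K) σ²`. -/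
theorem closeness_generalization_quadratic
    {Ω : Type*} [MeasureSpace Ω] [IsProbabilityMeasure (ℙ : Measure Ω)]
    {d K : ℕ} (hK : 0 < K)
    (X : Fin K → Ω → EuclideanSpace ℝ (Fin d)) (Y : Ω → EuclideanSpace ℝ (Fin d))
    (hmeas : ∀ k, Measurable (X k)) (hYmeas : Measurable Y)
    (hindep : iIndepFun (Sum.elim X fun _ : Unit => Y))
    (hident : ∀ k, IdentDistrib (X k) Y)
    (hL2 : ∀ k, MemLp (X k) 2) (hYL2 : MemLp Y 2)
    (μ : EuclideanSpace ℝ (Fin d)) (σ2 : ℝ)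
    (hmean : ∀ k, ∫ ω, X k ω = μ) (hYmean : ∫ ω, Y ω = μ)
    (hvar : ∀ k, ∫ ω, ‖X k ω - μ‖ ^ 2 = σ2) (hYvar : ∫ ω, ‖Y ω - μ‖ ^ 2 = σ2)
    (a : ℝ) (ha : 0 < a) (Ctrain : ℝ) :
    ∫ ω, ((a / 2) * ‖(K : ℝ)⁻¹ • (∑ k, X k ω) - Y ω‖ ^ 2
        + (Ctrain - (a / (2 * K)) * ∑ k, ‖(K : ℝ)⁻¹ • (∑ j, X j ω) - X k ω‖ ^ 2))
      = Ctrain + (a / K) * σ2 := by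
  have hK0 : (K : ℝ) ≠ 0 := Nat.cast_ne_zero.mpr hK.ne'
  -- centered variables
  have hZL2 : ∀ k, MemLp (fun ω => X k ω - μ) 2 := fun k => (hL2 k).sub (memLp_const μ)
  have hWL2 : MemLp (fun ω => Y ω - μ) 2 := hYL2.sub (memLp_const μ)
  have hZmean : ∀ k, ∫ ω, (X k ω - μ) = 0 := by
    intro k
    rw [integral_sub ((hL2 k).integrable one_le_two) (integrable_const μ), hmean k,
      integral_const]
    simp
  have hWmean : ∫ ω, (Y ω - μ) = 0 := by
    rw [integral_sub (hYL2.integrable one_le_two) (integrable_const μ), hYmean, integral_const]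
    simp
  have hsubm : Measurable (fun v : EuclideanSpace ℝ (Fin d) => v - μ) :=
    measurable_id.sub measurable_const
  -- independence of centered variables
  have hXX : ∀ i j, i ≠ j →
      IndepFun (fun ω => X i ω - μ) (fun ω => X j ω - μ) := by
    intro i j hij
    have h := hindep.indepFun
      (show (Sum.inl i : Fin K ⊕ Unit) ≠ Sum.inl j from fun h => hij (Sum.inl.inj h))
    exact h.comp hsubm hsubm
  have hXY : ∀ k, IndepFun (fun ω => X k ω - μ) (fun ω => Y ω - μ) := by
    intro k
    have h := hindep.indepFun
      (show (Sum.inl k : Fin K ⊕ Unit) ≠ Sum.inr () from fun h => by simp at h)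
    exact h.comp hsubm hsubm
  -- basic second-moment integrals
  have hZZ : ∀ i j, i ≠ j → ∫ ω, ⟪X i ω - μ, X j ω - μ⟫ = 0 := by
    intro i j hij
    rw [aux_indep_integral_inner (hZL2 i) (hZL2 j) (hXX i j hij), hZmean i, hZmean j,
      inner_zero_left]
  have hZW : ∀ k, ∫ ω, ⟪X k ω - μ, Y ω - μ⟫ = 0 := by
    intro k
    rw [aux_indep_integral_inner (hZL2 k) hWL2 (hXY k), hZmean k, inner_zero_left]
  have hZdiag : ∀ k, ∫ ω, ⟪X k ω - μ, X k ω - μ⟫ = σ2 := by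
    intro k
    simp_rw [real_inner_self_eq_norm_sq]
    exact hvar k
  have hWdiag : ∫ ω, ⟪Y ω - μ, Y ω - μ⟫ = σ2 := by
    simp_rw [real_inner_self_eq_norm_sq]
    exact hYvar
  -- integrability of the four building blocks
  have iA : Integrable (fun ω => ∑ i, ∑ j, ⟪X i ω - μ, X j ω - μ⟫) :=
    integrable_finset_sum _ fun i _ =>
      integrable_finset_sum _ fun j _ => aux_integrable_inner (hZL2 i) (hZL2 j)
  have iB : Integrable (fun ω => ∑ k, ⟪X k ω - μ, Y ω - μ⟫) :=
    integrable_finset_sum _ fun k _ => aux_integrable_inner (hZL2 k) hWL2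
  have iC : Integrable (fun ω => ⟪Y ω - μ, Y ω - μ⟫) := aux_integrable_inner hWL2 hWL2
  have iD : Integrable (fun ω => ∑ k, ⟪X k ω - μ, X k ω - μ⟫) :=
    integrable_finset_sum _ fun k _ => aux_integrable_inner (hZL2 k) (hZL2 k)
  -- values of the four integrals
  have hIA : ∫ ω, ∑ i, ∑ j, ⟪X i ω - μ, X j ω - μ⟫ = K * σ2 := by
    rw [integral_finset_sum _ (fun i _ =>
      integrable_finset_sum _ fun j _ => aux_integrable_inner (hZL2 i) (hZL2 j))]
    have hrow : ∀ i : Fin K, ∫ ω, ∑ j, ⟪X i ω - μ, X j ω - μ⟫ = σ2 := by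
      intro i
      rw [integral_finset_sum _ (fun j _ => aux_integrable_inner (hZL2 i) (hZL2 j))]
      rw [Finset.sum_eq_single i (fun j _ hji => hZZ i j (Ne.symm hji)) (by simp)]
      exact hZdiag i
    rw [Finset.sum_congr rfl fun i _ => hrow i, Finset.sum_const, Finset.card_univ,
      Fintype.card_fin, nsmul_eq_mul]
  have hIB : ∫ ω, ∑ k, ⟪X k ω - μ, Y ω - μ⟫ = 0 := by
    rw [integral_finset_sum _ (fun k _ => aux_integrable_inner (hZL2 k) hWL2)]
    exact Finset.sum_eq_zero fun k _ => hZW k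
  have hID : ∫ ω, ∑ k, ⟪X k ω - μ, X k ω - μ⟫ = K * σ2 := by
    rw [integral_finset_sum _ (fun k _ => aux_integrable_inner (hZL2 k) (hZL2 k))]
    rw [Finset.sum_congr rfl fun k _ => hZdiag k, Finset.sum_const, Finset.card_univ,
      Fintype.card_fin, nsmul_eq_mul]
  -- rewrite the integrand pointwise
  calc ∫ ω, ((a / 2) * ‖(K : ℝ)⁻¹ • (∑ k, X k ω) - Y ω‖ ^ 2
        + (Ctrain - (a / (2 * K)) * ∑ k, ‖(K : ℝ)⁻¹ • (∑ j, X j ω) - X k ω‖ ^ 2))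
      = ∫ ω, (Ctrain + (a * ((K : ℝ)⁻¹) ^ 2) * (∑ i, ∑ j, ⟪X i ω - μ, X j ω - μ⟫)
          - (a / K) * (∑ k, ⟪X k ω - μ, Y ω - μ⟫)
          + (a / 2) * ⟪Y ω - μ, Y ω - μ⟫
          - (a / (2 * K)) * (∑ k, ⟪X k ω - μ, X k ω - μ⟫)) := by
        refine integral_congr_ae (Filter.Eventually.of_forall fun ω => ?_)
        exact aux_pointwise hK (fun k => X k ω) (Y ω) μ a Ctrain
    _ = Ctrain + (a / K) * σ2 := by
        have i1 : Integrable (fun ω =>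
            Ctrain + (a * ((K : ℝ)⁻¹) ^ 2) * (∑ i, ∑ j, ⟪X i ω - μ, X j ω - μ⟫)) :=
          (integrable_const Ctrain).add (iA.const_mul _)
        have i2 : Integrable (fun ω =>
            Ctrain + (a * ((K : ℝ)⁻¹) ^ 2) * (∑ i, ∑ j, ⟪X i ω - μ, X j ω - μ⟫)
              - (a / K) * (∑ k, ⟪X k ω - μ, Y ω - μ⟫)) :=
          i1.sub (iB.const_mul (a / K))
        have i3 : Integrable (fun ω =>
            Ctrain + (a * ((K : ℝ)⁻¹) ^ 2) * (∑ i, ∑ j, ⟪X i ω - μ, X j ω - μ⟫)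
              - (a / K) * (∑ k, ⟪X k ω - μ, Y ω - μ⟫)
              + (a / 2) * ⟪Y ω - μ, Y ω - μ⟫) :=
          i2.add (iC.const_mul (a / 2))
        rw [integral_sub i3 (iD.const_mul (a / (2 * K))), integral_add i2 (iC.const_mul (a / 2)),
          integral_sub i1 (iB.const_mul (a / K)),
          integral_add (integrable_const Ctrain) (iA.const_mul _),
          integral_const, integral_const_mul, integral_const_mul, integral_const_mul,
          integral_const_mul, hIA, hIB, hWdiag, hID]
        simp only [measure_univ, probReal_univ, ENNReal.toReal_one, smul_eq_mul, one_mul, mul_zero, sub_zero]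
        field_simp
        ring
end

section
/- Let H₁, …, H_K be self-adjoint continuous linear operators on ℝ^d and suppose there are constants 0 < λ_min ≤ λ_max such that λ_min·‖u‖₂² ≤ ⟨u, H_k u⟩ ≤ λ_max·‖u‖₂² for every k and every u ∈ ℝ^d. Let θ̄, θ₁, …, θ_K ∈ ℝ^d satisfy the stationarity condition Σ_{k=1}^K H_k(θ̄ − θ_k) = 0. Then for every μ ∈ ℝ^d, ‖θ̄ − μ‖₂ ≤ (λ_max/(K·λ_min))·Σ_{k=1}^K ‖θ_k − μ‖₂. -/
set_option maxHeartbeats 1000000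

/-- Cauchy–Schwarz-type bound for a self-adjoint PSD operator with spectrum ≤ lamMax. -/
lemma aux_inner_bound {d : ℕ} (T : EuclideanSpace ℝ (Fin d) →L[ℝ] EuclideanSpace ℝ (Fin d))
    (hself : ∀ u v : EuclideanSpace ℝ (Fin d), (inner ℝ (T u) v : ℝ) = inner ℝ u (T v))
    (lamMax : ℝ) (hpos : ∀ u : EuclideanSpace ℝ (Fin d), 0 ≤ (inner ℝ u (T u) : ℝ))
    (hhigh : ∀ u : EuclideanSpace ℝ (Fin d), (inner ℝ u (T u) : ℝ) ≤ lamMax * ‖u‖ ^ 2)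
    (hlam : 0 ≤ lamMax) (u v : EuclideanSpace ℝ (Fin d)) :
    (inner ℝ u (T v) : ℝ) ≤ lamMax * ‖u‖ * ‖v‖ := by
  set a : ℝ := inner ℝ v (T v)
  set b : ℝ := 2 * inner ℝ u (T v)
  set c : ℝ := inner ℝ u (T u)
  have hquad : ∀ t : ℝ, 0 ≤ a * (t * t) + b * t + c := by
    intro t
    have h0 := hpos (u + t • v)
    have hexp : (inner ℝ (u + t • v) (T (u + t • v)) : ℝ) = a * t ^ 2 + b * t + c := by
      have hsym : (inner ℝ v (T u) : ℝ) = inner ℝ u (T v) := by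
        rw [← hself]; exact real_inner_comm _ _
      simp only [map_add, map_smul, inner_add_left, inner_add_right, inner_smul_left,
        inner_smul_right, RCLike.conj_to_real, a, b, c, hsym]
      ring
    linarith [hexp ▸ h0, sq t]
  have hdisc : discrim a b c ≤ 0 := discrim_le_zero hquad
  have hsq : (inner ℝ u (T v) : ℝ) ^ 2 ≤ a * c := by
    simp only [discrim, b] at hdisc; nlinarith
  have hac : a * c ≤ (lamMax * ‖u‖ * ‖v‖) ^ 2 := by
    have h1 := hhigh u
    have h2 := hhigh v
    have h3 := hpos u
    have h4 := hpos v
    have : a * c ≤ (lamMax * ‖v‖ ^ 2) * (lamMax * ‖u‖ ^ 2) :=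
      mul_le_mul h2 h1 h3 (by positivity)
    nlinarith
  nlinarith [norm_nonneg u, norm_nonneg v, sq_nonneg ((inner ℝ u (T v) : ℝ) - lamMax * ‖u‖ * ‖v‖),
    mul_nonneg (mul_nonneg hlam (norm_nonneg u)) (norm_nonneg v)]

/-- **Estimation-error bound from stationarity.** If `H 1, …, H K` are self-adjoint
continuous linear operators on `ℝ^d` with spectra in `[λ_min, λ_max]` (`0 < λ_min ≤ λ_max`)
and `∑ k, H k (θ̄ - θ k) = 0`, then for every `μ`,
`‖θ̄ - μ‖ ≤ (λ_max/(K λ_min)) ∑ k ‖θ k - μ‖`. -/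
theorem estimation_error_bound {d K : ℕ} (hK : 0 < K)
    (H : Fin K → EuclideanSpace ℝ (Fin d) →L[ℝ] EuclideanSpace ℝ (Fin d))
    (hself : ∀ k, ∀ u v : EuclideanSpace ℝ (Fin d),
      (inner ℝ (H k u) v : ℝ) = inner ℝ u (H k v))
    (lamMin lamMax : ℝ) (hlamMin : 0 < lamMin) (hle : lamMin ≤ lamMax)
    (hlow : ∀ k, ∀ u : EuclideanSpace ℝ (Fin d),
      lamMin * ‖u‖ ^ 2 ≤ (inner ℝ u (H k u) : ℝ))
    (hhigh : ∀ k, ∀ u : EuclideanSpace ℝ (Fin d),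
      (inner ℝ u (H k u) : ℝ) ≤ lamMax * ‖u‖ ^ 2)
    (θbar : EuclideanSpace ℝ (Fin d)) (θ : Fin K → EuclideanSpace ℝ (Fin d))
    (hstat : ∑ k, H k (θbar - θ k) = 0)
    (μ : EuclideanSpace ℝ (Fin d)) :
    ‖θbar - μ‖ ≤ (lamMax / (K * lamMin)) * ∑ k, ‖θ k - μ‖ := by
  set e := θbar - μ with he
  have hlamMax : 0 ≤ lamMax := le_trans hlamMin.le hle
  have hpos : ∀ k, ∀ u : EuclideanSpace ℝ (Fin d), 0 ≤ (inner ℝ u (H k u) : ℝ) := fun k u =>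
    le_trans (by positivity) (hlow k u)
  -- ∑ H_k e = ∑ H_k (θ k - μ)
  have hkey : (∑ k, (inner ℝ e ((H k) e) : ℝ)) = ∑ k, (inner ℝ e ((H k) (θ k - μ)) : ℝ) := by
    have h1 : ∑ k, (H k) e - ∑ k, (H k) (θ k - μ) = 0 := by
      rw [← Finset.sum_sub_distrib]
      calc ∑ k, ((H k) e - (H k) (θ k - μ)) = ∑ k, (H k) (θbar - θ k) := by
            apply Finset.sum_congr rfl; intro k _
            rw [← map_sub]
            congr 1
            rw [he]
            abel
        _ = 0 := hstat
    have h2 : (∑ k, (H k) e) = ∑ k, (H k) (θ k - μ) := by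
      have := sub_eq_zero.mp h1; exact this
    calc (∑ k, (inner ℝ e ((H k) e) : ℝ)) = inner ℝ e (∑ k, (H k) e) := by
          rw [inner_sum]
      _ = inner ℝ e (∑ k, (H k) (θ k - μ)) := by rw [h2]
      _ = ∑ k, (inner ℝ e ((H k) (θ k - μ)) : ℝ) := by rw [inner_sum]
  have hlower : (K : ℝ) * lamMin * ‖e‖ ^ 2 ≤ ∑ k, (inner ℝ e ((H k) e) : ℝ) := by
    calc (K : ℝ) * lamMin * ‖e‖ ^ 2 = ∑ _k : Fin K, lamMin * ‖e‖ ^ 2 := by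
          rw [Finset.sum_const, Finset.card_univ, Fintype.card_fin]; ring
      _ ≤ _ := Finset.sum_le_sum fun k _ => hlow k e
  have hupper : (∑ k, (inner ℝ e ((H k) (θ k - μ)) : ℝ)) ≤ lamMax * ‖e‖ * ∑ k, ‖θ k - μ‖ := by
    rw [Finset.mul_sum]
    apply Finset.sum_le_sum
    intro k _
    calc (inner ℝ e ((H k) (θ k - μ)) : ℝ) ≤ lamMax * ‖e‖ * ‖θ k - μ‖ :=
          aux_inner_bound (H k) (hself k) lamMax (hpos k) (hhigh k) hlamMax e (θ k - μ)
      _ = _ := by ring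
  have hmain : (K : ℝ) * lamMin * ‖e‖ ^ 2 ≤ lamMax * ‖e‖ * ∑ k, ‖θ k - μ‖ := by
    calc (K : ℝ) * lamMin * ‖e‖ ^ 2 ≤ ∑ k, (inner ℝ e ((H k) e) : ℝ) := hlower
      _ = _ := hkey
      _ ≤ _ := hupper
  have hKpos : (0:ℝ) < (K : ℝ) * lamMin := by positivity
  rcases eq_or_lt_of_le (norm_nonneg e) with h0 | h0
  · rw [← h0]
    exact mul_nonneg (div_nonneg hlamMax hKpos.le)
      (Finset.sum_nonneg fun k _ => norm_nonneg _)
  · rw [div_mul_eq_mul_div, le_div_iff₀ hKpos]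
    nlinarith [hmain, h0]
end

section
/- Let L₁, …, L_K : ℝ^d → ℝ be twice continuously differentiable and let θ ∈ ℝ^d satisfy Σ_{k=1}^K ∇L_k(θ) = 0. For each k, let θ_k* ∈ ℝ^d satisfy ∇L_k(θ_k*) = 0 and θ_k* ≠ θ, and suppose λ_min > 0 where λ_min = min over k of the infimum over ξ on the segment [θ, θ_k*] of ⟨u_k, ∇²L_k(ξ) u_k⟩ with u_k = (θ − θ_k*)/‖θ − θ_k*‖₂. Assume additionally that ∇L_i(θ) ≠ 0 for all i and let G = max_k ‖∇L_k(θ)‖₂. Then (1/K)·Σ_{k=1}^K ‖θ − θ_k*‖₂² ≤ (1/(K·λ_min²))·Σ_{i ≠ j} (−⟨∇L_i(θ), ∇L_j(θ)⟩) ≤ (G²/(K·λ_min²))·Σ_{i ≠ j} (1 − CosSim(∇L_i(θ), ∇L_j(θ))). -/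
open scoped RealInnerProductSpace

/-- Cosine similarity of two vectors in a real inner product space. -/
noncomputable def cosSim {E : Type*} [NormedAddCommGroup E] [InnerProductSpace ℝ E]
    (x y : E) : ℝ :=
  (inner ℝ x y : ℝ) / (‖x‖ * ‖y‖)

/-!
Along the segment from `θ_k*` to `θ`, the derivative of
`t ↦ ⟪u_k, ∇L_k(θ_k* + t (θ - θ_k*))⟫` is at least `λ_min ‖θ - θ_k*‖`, so the mean value
theorem and `∇L_k(θ_k*) = 0` give `λ_min ‖θ - θ_k*‖ ≤ ‖∇L_k(θ)‖`. Stationarity of the average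
means `‖∑_k ∇L_k(θ)‖² = 0`, i.e. `∑_k ‖∇L_k(θ)‖² = -∑_{i≠j} ⟪∇L_i(θ), ∇L_j(θ)⟫`, which gives
the first inequality. The second holds term by term, since `⟪x, y⟫ = CosSim(x, y) ‖x‖ ‖y‖`
with `|CosSim(x, y)| ≤ 1` and `‖x‖ ‖y‖ ≤ G²`.
-/

open Finset

section MeanValue

variable {E F : Type*} [NormedAddCommGroup E] [NormedSpace ℝ E]
  [NormedAddCommGroup F] [InnerProductSpace ℝ F]

theorem le_inner_sub_of_le_inner_fderiv {g : E → F} (hg : Differentiable ℝ g) {x y : E}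
    (w : F) {c : ℝ} (hc : ∀ ξ ∈ segment ℝ x y, c ≤ ⟪w, fderiv ℝ g ξ (y - x)⟫) :
    c ≤ ⟪w, g y - g x⟫ := by
  set φ : ℝ → ℝ := fun t => ⟪w, g (x + t • (y - x))⟫
  have hφ : ∀ t, HasDerivAt φ ⟪w, fderiv ℝ g (x + t • (y - x)) (y - x)⟫ t := fun t =>
    (innerSL ℝ w).hasFDerivAt.comp_hasDerivAt t <| (hg _).hasFDerivAt.comp_hasDerivAt t <| by
      simpa using ((hasDerivAt_id t).smul_const (y - x)).const_add x
  obtain ⟨t, ht, hslope⟩ := exists_hasDerivAt_eq_slope φ _ zero_lt_one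
    (fun t _ => (hφ t).continuousAt.continuousWithinAt) (fun t _ => hφ t)
  have hmem : x + t • (y - x) ∈ segment ℝ x y :=
    segment_eq_image' ℝ x y ▸ ⟨t, Set.Ioo_subset_Icc_self ht, rfl⟩
  calc c ≤ φ 1 - φ 0 := by simpa only [hslope, sub_zero, div_one] using hc _ hmem
    _ = ⟪w, g y - g x⟫ := by simp [φ, inner_sub_right]

end MeanValue

section Gradient

variable {E : Type*} [NormedAddCommGroup E] [InnerProductSpace ℝ E] [CompleteSpace E]

theorem ContDiff.differentiable_gradient {f : E → ℝ} (hf : ContDiff ℝ 2 f) :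
    Differentiable ℝ (gradient f) :=
  (InnerProductSpace.toDual ℝ E).symm.toContinuousLinearEquiv.differentiable.comp
    ((hf.fderiv_right le_rfl).differentiable one_ne_zero)

theorem mul_norm_sub_le_norm_gradient {f : E → ℝ} (hf : Differentiable ℝ (gradient f))
    {θ θ' : E} (hcrit : gradient f θ' = 0) {lam : ℝ}
    (hcurv : ∀ ξ ∈ segment ℝ θ θ',
      lam ≤ ⟪‖θ - θ'‖⁻¹ • (θ - θ'), fderiv ℝ (gradient f) ξ (‖θ - θ'‖⁻¹ • (θ - θ'))⟫) :
    lam * ‖θ - θ'‖ ≤ ‖gradient f θ‖ := by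
  set u := ‖θ - θ'‖⁻¹ • (θ - θ')
  have hu : ‖u‖ ≤ 1 := by
    rcases eq_or_ne θ θ' with rfl | hne
    · simp [u]
    · exact (norm_smul_inv_norm (𝕜 := ℝ) (sub_ne_zero.mpr hne)).le
  have hsub : θ - θ' = ‖θ - θ'‖ • u := by
    rcases eq_or_ne θ θ' with rfl | hne
    · rw [sub_self, norm_zero, zero_smul]
    · rw [smul_smul, mul_inv_cancel₀ (norm_ne_zero_iff.mpr (sub_ne_zero.mpr hne)), one_smul]
  have hmv : lam * ‖θ - θ'‖ ≤ ⟪u, gradient f θ - gradient f θ'⟫ := by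
    refine le_inner_sub_of_le_inner_fderiv hf u fun ξ hξ => ?_
    rw [segment_symm] at hξ
    have hlin : fderiv ℝ (gradient f) ξ (θ - θ') = ‖θ - θ'‖ • fderiv ℝ (gradient f) ξ u := by
      rw [← map_smul, ← hsub]
    rw [hlin, inner_smul_right, mul_comm]
    exact mul_le_mul_of_nonneg_left (hcurv ξ hξ) (norm_nonneg _)
  calc lam * ‖θ - θ'‖ ≤ ⟪u, gradient f θ⟫ := by simpa [hcrit] using hmv
    _ ≤ ‖u‖ * ‖gradient f θ‖ := real_inner_le_norm _ _
    _ ≤ ‖gradient f θ‖ := mul_le_of_le_one_left (norm_nonneg _) hu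

end Gradient

section Inner

variable {E : Type*} [NormedAddCommGroup E] [InnerProductSpace ℝ E]

theorem sum_norm_sq_eq_neg_sum_offDiag_inner {ι : Type*} [Fintype ι] [DecidableEq ι]
    {v : ι → E} (hv : ∑ i, v i = 0) :
    ∑ i, ‖v i‖ ^ 2 = ∑ p ∈ (univ : Finset ι).offDiag, -⟪v p.1, v p.2⟫ := by
  have hzero : ∑ p ∈ (univ : Finset ι) ×ˢ univ, ⟪v p.1, v p.2⟫ = 0 := by
    rw [sum_product, ← inner_zero_left (𝕜 := ℝ) (x := (0 : E)), ← hv, sum_inner]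
    simp_rw [inner_sum]
  rw [← diag_union_offDiag, sum_union (disjoint_diag_offDiag _), sum_diag] at hzero
  simp_rw [real_inner_self_eq_norm_sq] at hzero
  rw [sum_neg_distrib]
  linarith

theorem cosSim_mul_norm_mul_norm (x y : E) : cosSim x y * (‖x‖ * ‖y‖) = ⟪x, y⟫ := by
  rcases eq_or_ne (‖x‖ * ‖y‖) 0 with h | h
  · rcases mul_eq_zero.mp h with h | h <;> simp [norm_eq_zero.mp h]
  · exact div_mul_cancel₀ _ h

theorem abs_cosSim_le_one (x y : E) : |cosSim x y| ≤ 1 :=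
  abs_real_inner_div_norm_mul_norm_le_one x y

theorem neg_inner_le_sq_mul_one_sub_cosSim {x y : E} {G : ℝ} (hx : ‖x‖ ≤ G) (hy : ‖y‖ ≤ G) :
    -⟪x, y⟫ ≤ G ^ 2 * (1 - cosSim x y) := by
  have hxy : ‖x‖ * ‖y‖ ≤ G ^ 2 := by
    rw [sq]; exact mul_le_mul hx hy (norm_nonneg _) ((norm_nonneg _).trans hx)
  obtain ⟨hlo, hhi⟩ := abs_le.mp (abs_cosSim_le_one x y)
  rw [← cosSim_mul_norm_mul_norm]
  nlinarith [mul_nonneg (norm_nonneg x) (norm_nonneg y)]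

end Inner

theorem gradient_similarity_bounds_closeness_general {d K : ℕ} (hK : 0 < K)
    (L : Fin K → EuclideanSpace ℝ (Fin d) → ℝ)
    (hL : ∀ k, ContDiff ℝ 2 (L k))
    (θ : EuclideanSpace ℝ (Fin d))
    (hstat : ∑ k, gradient (L k) θ = 0)
    (θs : Fin K → EuclideanSpace ℝ (Fin d))
    (hcrit : ∀ k, gradient (L k) (θs k) = 0)
    (lamMin : ℝ) (hlam : 0 < lamMin)
    (hcurv : ∀ k, ∀ ξ ∈ segment ℝ θ (θs k),
      lamMin ≤ ⟪‖θ - θs k‖⁻¹ • (θ - θs k),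
        fderiv ℝ (gradient (L k)) ξ (‖θ - θs k‖⁻¹ • (θ - θs k))⟫)
    (G : ℝ)
    (hG : G = (Finset.univ.sup' (Finset.univ_nonempty_iff.mpr
        (Fin.pos_iff_nonempty.mp hK)) fun k => ‖gradient (L k) θ‖)) :
    (K : ℝ)⁻¹ * ∑ k, ‖θ - θs k‖ ^ 2
      ≤ (1 / (K * lamMin ^ 2)) *
          ∑ p ∈ (Finset.univ : Finset (Fin K)).offDiag,
            -(⟪gradient (L p.1) θ, gradient (L p.2) θ⟫)
    ∧ (1 / (K * lamMin ^ 2)) *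
          ∑ p ∈ (Finset.univ : Finset (Fin K)).offDiag,
            -(⟪gradient (L p.1) θ, gradient (L p.2) θ⟫)
      ≤ (G ^ 2 / (K * lamMin ^ 2)) *
          ∑ p ∈ (Finset.univ : Finset (Fin K)).offDiag,
            (1 - cosSim (gradient (L p.1) θ) (gradient (L p.2) θ)) := by
  set g := fun k => gradient (L k) θ
  have hdist : ∀ k, ‖θ - θs k‖ ^ 2 ≤ ‖g k‖ ^ 2 / lamMin ^ 2 := fun k => by
    rw [le_div_iff₀ (by positivity), ← mul_pow, mul_comm]
    exact pow_le_pow_left₀ (by positivity)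
      (mul_norm_sub_le_norm_gradient (hL k).differentiable_gradient (hcrit k) (hcurv k)) 2
  have hGk : ∀ k, ‖g k‖ ≤ G := fun k => hG ▸ le_sup' (fun k => ‖g k‖) (mem_univ k)
  constructor
  · calc (K : ℝ)⁻¹ * ∑ k, ‖θ - θs k‖ ^ 2 ≤ (K : ℝ)⁻¹ * ∑ k, ‖g k‖ ^ 2 / lamMin ^ 2 := by
          gcongr with k; exact hdist k
      _ = _ := by
          rw [← sum_div, sum_norm_sq_eq_neg_sum_offDiag_inner hstat]
          field_simp
  · calc _ ≤ (1 / (K * lamMin ^ 2)) * ∑ p ∈ (univ : Finset (Fin K)).offDiag,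
            G ^ 2 * (1 - cosSim (g p.1) (g p.2)) := by
          gcongr with p
          exact neg_inner_le_sq_mul_one_sub_cosSim (hGk p.1) (hGk p.2)
      _ = _ := by rw [← mul_sum]; ring

/-- **Gradient similarity upper bounds closeness.** Let `θ` be a stationary point of the
averaged loss (`∑ k ∇L_k(θ) = 0`), let `θ_k*` be critical points of the individual losses
with `θ_k* ≠ θ`, and suppose the directional curvature of `L_k` along each segment
`[θ, θ_k*]` in the direction `(θ - θ_k*)/‖θ - θ_k*‖` is at least `λ_min > 0`, a lower
bound attained as the minimum over `k` of the corresponding infima. With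
`G = max_k ‖∇L_k(θ)‖` and all `∇L_i(θ) ≠ 0`,
`(1/K) ∑ k ‖θ - θ_k*‖² ≤ (1/(K λ_min²)) ∑_{i≠j} (-⟨∇L_i(θ), ∇L_j(θ)⟩)
  ≤ (G²/(K λ_min²)) ∑_{i≠j} (1 - CosSim(∇L_i(θ), ∇L_j(θ)))`. -/
theorem gradient_similarity_bounds_closeness {d K : ℕ} (hK : 0 < K)
    (L : Fin K → EuclideanSpace ℝ (Fin d) → ℝ)
    (hL : ∀ k, ContDiff ℝ 2 (L k))
    (θ : EuclideanSpace ℝ (Fin d))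
    (hstat : ∑ k, gradient (L k) θ = 0)
    (θs : Fin K → EuclideanSpace ℝ (Fin d))
    (hcrit : ∀ k, gradient (L k) (θs k) = 0)
    (hne : ∀ k, θs k ≠ θ)
    (lamMin : ℝ) (hlam : 0 < lamMin)
    (hcurv : ∀ k, ∀ ξ ∈ segment ℝ θ (θs k),
      lamMin ≤ ⟪‖θ - θs k‖⁻¹ • (θ - θs k),
        fderiv ℝ (gradient (L k)) ξ (‖θ - θs k‖⁻¹ • (θ - θs k))⟫)
    (hgradne : ∀ i, gradient (L i) θ ≠ 0)
    (G : ℝ)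
    (hG : G = (Finset.univ.sup' (Finset.univ_nonempty_iff.mpr
        (Fin.pos_iff_nonempty.mp hK)) fun k => ‖gradient (L k) θ‖)) :
    (K : ℝ)⁻¹ * ∑ k, ‖θ - θs k‖ ^ 2
      ≤ (1 / (K * lamMin ^ 2)) *
          ∑ p ∈ (Finset.univ : Finset (Fin K)).offDiag,
            -(⟪gradient (L p.1) θ, gradient (L p.2) θ⟫)
    ∧ (1 / (K * lamMin ^ 2)) *
          ∑ p ∈ (Finset.univ : Finset (Fin K)).offDiag,
            -(⟪gradient (L p.1) θ, gradient (L p.2) θ⟫)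
      ≤ (G ^ 2 / (K * lamMin ^ 2)) *
          ∑ p ∈ (Finset.univ : Finset (Fin K)).offDiag,
            (1 - cosSim (gradient (L p.1) θ) (gradient (L p.2) θ)) :=
  gradient_similarity_bounds_closeness_general hK L hL θ hstat θs hcrit lamMin hlam hcurv G hG
end

section
/- Let f : ℝ^d → ℝ be twice continuously differentiable and suppose there are constants G_min > 0 and L ≥ 0 such that ‖∇f(θ)‖₂ ≥ G_min and ‖∇²f(θ)‖ ≤ L (operator norm) for all θ ∈ ℝ^d. Then the normalized gradient map θ ↦ ∇f(θ)/‖∇f(θ)‖₂ is Lipschitz continuous with Lipschitz constant L/G_min. -/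
/-! The Hessian bound makes `∇f` `L`-Lipschitz by the mean value theorem, and
`u ↦ u / ‖u‖` is `1/G`-Lipschitz on `{u | G ≤ ‖u‖}`, since
`‖u‖ ‖v‖ ‖u/‖u‖ - v/‖v‖‖² = ‖u - v‖² - (‖u‖ - ‖v‖)²`. -/

open InnerProductSpace

section Normalize

variable {E : Type*} [NormedAddCommGroup E] [InnerProductSpace ℝ E]

theorem norm_mul_norm_mul_sq_norm_normalize_sub_le (u v : E) :
    ‖u‖ * ‖v‖ * ‖NormedSpace.normalize u - NormedSpace.normalize v‖ ^ 2 ≤ ‖u - v‖ ^ 2 := by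
  rcases eq_or_ne u 0 with rfl | hu
  · simp
  rcases eq_or_ne v 0 with rfl | hv
  · simp
  have hlhs : ‖u‖ * ‖v‖ * ‖NormedSpace.normalize u - NormedSpace.normalize v‖ ^ 2
      = 2 * (‖u‖ * ‖v‖) - 2 * ⟪u, v⟫_ℝ := by
    rw [norm_sub_sq_real, NormedSpace.norm_normalize hu, NormedSpace.norm_normalize hv]
    simp only [NormedSpace.normalize, real_inner_smul_left, real_inner_smul_right]
    field_simp
    ring
  rw [hlhs, norm_sub_sq_real]
  nlinarith [sq_nonneg (‖u‖ - ‖v‖)]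

theorem norm_normalize_sub_normalize_le_div {u v : E} {G : ℝ} (hG : 0 < G) (hu : G ≤ ‖u‖)
    (hv : G ≤ ‖v‖) : ‖NormedSpace.normalize u - NormedSpace.normalize v‖ ≤ ‖u - v‖ / G := by
  rw [le_div_iff₀ hG, mul_comm]
  refine pow_le_pow_iff_left₀ (by positivity) (norm_nonneg _) two_ne_zero |>.mp ?_
  calc (G * ‖NormedSpace.normalize u - NormedSpace.normalize v‖) ^ 2
      = G * G * ‖NormedSpace.normalize u - NormedSpace.normalize v‖ ^ 2 := by ring
    _ ≤ ‖u‖ * ‖v‖ * ‖NormedSpace.normalize u - NormedSpace.normalize v‖ ^ 2 := by gcongr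
    _ ≤ ‖u - v‖ ^ 2 := norm_mul_norm_mul_sq_norm_normalize_sub_le u v

end Normalize

theorem ContDiff.differentiable_gradient_s12 {F : Type*} [NormedAddCommGroup F]
    [InnerProductSpace ℝ F] [CompleteSpace F] {f : F → ℝ} (hf : ContDiff ℝ 2 f) :
    Differentiable ℝ (gradient f) :=
  (toDual ℝ F).symm.toContinuousLinearEquiv.differentiable.comp
    ((hf.fderiv_right (m := 1) le_rfl).differentiable one_ne_zero)

theorem normalized_gradient_lipschitz_general {d : ℕ}
    (f : EuclideanSpace ℝ (Fin d) → ℝ) (hf : ContDiff ℝ 2 f)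
    (Gmin L : ℝ) (hGmin : 0 < Gmin)
    (hgrad : ∀ θ : EuclideanSpace ℝ (Fin d), Gmin ≤ ‖gradient f θ‖)
    (hHess : ∀ θ : EuclideanSpace ℝ (Fin d), ‖fderiv ℝ (gradient f) θ‖ ≤ L) :
    ∀ x y : EuclideanSpace ℝ (Fin d),
      ‖‖gradient f x‖⁻¹ • gradient f x - ‖gradient f y‖⁻¹ • gradient f y‖
        ≤ (L / Gmin) * ‖x - y‖ := by
  intro x y
  have hgradient_lipschitz : ‖gradient f x - gradient f y‖ ≤ L * ‖x - y‖ :=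
    convex_univ.norm_image_sub_le_of_norm_fderiv_le (fun θ _ => hf.differentiable_gradient_s12 θ)
      (fun θ _ => hHess θ) (Set.mem_univ y) (Set.mem_univ x)
  calc ‖NormedSpace.normalize (gradient f x) - NormedSpace.normalize (gradient f y)‖
      ≤ ‖gradient f x - gradient f y‖ / Gmin :=
        norm_normalize_sub_normalize_le_div hGmin (hgrad x) (hgrad y)
    _ ≤ L * ‖x - y‖ / Gmin := by gcongr
    _ = L / Gmin * ‖x - y‖ := by ring

/-- **The normalized gradient field is `L/G_min`-Lipschitz.** If `f` is C² with
`‖∇f‖ ≥ G_min > 0` everywhere and `‖∇²f‖ ≤ L` everywhere, then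
`θ ↦ ∇f(θ)/‖∇f(θ)‖` is Lipschitz with constant `L/G_min`. -/
theorem normalized_gradient_lipschitz {d : ℕ}
    (f : EuclideanSpace ℝ (Fin d) → ℝ) (hf : ContDiff ℝ 2 f)
    (Gmin L : ℝ) (hGmin : 0 < Gmin) (hL : 0 ≤ L)
    (hgrad : ∀ θ : EuclideanSpace ℝ (Fin d), Gmin ≤ ‖gradient f θ‖)
    (hHess : ∀ θ : EuclideanSpace ℝ (Fin d), ‖fderiv ℝ (gradient f) θ‖ ≤ L) :
    ∀ x y : EuclideanSpace ℝ (Fin d),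
      ‖‖gradient f x‖⁻¹ • gradient f x - ‖gradient f y‖⁻¹ • gradient f y‖
        ≤ (L / Gmin) * ‖x - y‖ :=
  normalized_gradient_lipschitz_general f hf Gmin L hGmin hgrad hHess
end

section
/- Let K ≥ 1 and let L₁, …, L_K : ℝ^d → ℝ be twice continuously differentiable with constants G_min > 0 and L ≥ 0 such that ‖∇L_i(θ)‖₂ ≥ G_min and ‖∇²L_i(θ)‖ ≤ L for all i and θ. Set L₁* = L/G_min and n_i(θ) = ∇L_i(θ)/‖∇L_i(θ)‖₂. Fix θ₀ ∈ ℝ^d, γ > 0, and an index sequence s₁, …, s_K ∈ {1,…,K}, and define θ_m = θ_{m−1} − γ·n_{s_m}(θ_{m−1}) for m ≥ 1 with θ_0 = θ₀. Then for every m with 0 ≤ m ≤ K: (i) ‖θ_m − θ₀‖₂ ≤ m·γ, and (ii) ‖θ_m − θ₀ + γ·Σ_{l=1}^{m} n_{s_l}(θ₀)‖₂ ≤ (L₁*/2)·m(m−1)·γ². -/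
/-- The Normalized SGD inner trajectory of the Nexus algorithm:
`θ_0 = θ₀` and `θ_{m+1} = θ_m - γ ∇L_{s_m}(θ_m)/‖∇L_{s_m}(θ_m)‖`. -/
noncomputable def nexusTraj {d K : ℕ} (L : Fin K → EuclideanSpace ℝ (Fin d) → ℝ)
    (γ : ℝ) (θ0 : EuclideanSpace ℝ (Fin d)) (s : ℕ → Fin K) :
    ℕ → EuclideanSpace ℝ (Fin d)
  | 0 => θ0
  | m + 1 =>
      nexusTraj L γ θ0 s m -
        γ • (‖gradient (L (s m)) (nexusTraj L γ θ0 s m)‖⁻¹ •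
          gradient (L (s m)) (nexusTraj L γ θ0 s m))

/-! Every step has length `γ`, which gives (i). For (ii), step `m` changes the deviation from
the frozen displacement by `γ • (n(θ₀) - n(θ_m))`. Normalization is `1/G`-Lipschitz outside the
ball of radius `G` (from `‖a‖‖b‖‖â - b̂‖² = ‖a - b‖² - (‖a‖ - ‖b‖)²`) and each gradient is
`L`-Lipschitz, so this change has norm at most `γ (L/G) ‖θ_m - θ₀‖ ≤ (L/G) m γ²` by (i); summing
over `m` gives `(L/G) m(m-1)/2 · γ²`. -/

open NormedSpace
open scoped RealInnerProductSpace

theorem NormedSpace.norm_normalize_le_one {V : Type*} [NormedAddCommGroup V] [NormedSpace ℝ V]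
    (x : V) : ‖normalize x‖ ≤ 1 := by
  rcases eq_or_ne x 0 with rfl | hx
  · simp
  · exact (norm_normalize_eq_one_iff.2 hx).le

section InnerProduct
variable {E : Type*} [NormedAddCommGroup E] [InnerProductSpace ℝ E]

theorem norm_mul_norm_mul_norm_normalize_sub_sq {a b : E} (ha : a ≠ 0) (hb : b ≠ 0) :
    ‖a‖ * ‖b‖ * ‖normalize a - normalize b‖ ^ 2 = ‖a - b‖ ^ 2 - (‖a‖ - ‖b‖) ^ 2 := by
  rw [norm_sub_sq_real, norm_sub_sq_real, norm_normalize_eq_one_iff.2 ha,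
    norm_normalize_eq_one_iff.2 hb, NormedSpace.normalize, NormedSpace.normalize,
    real_inner_smul_left, real_inner_smul_right]
  field_simp
  ring

theorem norm_normalize_sub_normalize_le {G : ℝ} (hG : 0 < G) {a b : E} (ha : G ≤ ‖a‖)
    (hb : G ≤ ‖b‖) : ‖normalize a - normalize b‖ ≤ ‖a - b‖ / G := by
  have ha0 : a ≠ 0 := norm_pos_iff.1 (hG.trans_le ha)
  have hb0 : b ≠ 0 := norm_pos_iff.1 (hG.trans_le hb)
  rw [le_div_iff₀ hG, mul_comm]
  refine pow_le_pow_iff_left₀ (by positivity) (norm_nonneg _) two_ne_zero |>.1 ?_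
  calc (G * ‖normalize a - normalize b‖) ^ 2
      = G * G * ‖normalize a - normalize b‖ ^ 2 := by ring
    _ ≤ ‖a‖ * ‖b‖ * ‖normalize a - normalize b‖ ^ 2 := by gcongr
    _ ≤ ‖a - b‖ ^ 2 := by
      rw [norm_mul_norm_mul_norm_normalize_sub_sq ha0 hb0]
      nlinarith [sq_nonneg (‖a‖ - ‖b‖)]

variable [CompleteSpace E] {f : E → ℝ}

theorem ContDiff.gradient {m n : WithTop ℕ∞} (hf : ContDiff ℝ n f) (hmn : m + 1 ≤ n) :
    ContDiff ℝ m (gradient f) :=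
  (InnerProductSpace.toDual ℝ E).symm.toContinuousLinearEquiv.contDiff.comp
    (hf.fderiv_right hmn)

theorem norm_gradient_sub_le (hf : ContDiff ℝ 2 f) {C : ℝ}
    (hC : ∀ x, ‖fderiv ℝ (gradient f) x‖ ≤ C) (x y : E) :
    ‖gradient f x - gradient f y‖ ≤ C * ‖x - y‖ :=
  Convex.norm_image_sub_le_of_norm_fderiv_le
    (fun z _ => ((hf.gradient (m := 1) (by norm_num)).differentiable one_ne_zero) z)
    (fun z _ => hC z) convex_univ (Set.mem_univ y) (Set.mem_univ x)

theorem norm_normalize_gradient_sub_le (hf : ContDiff ℝ 2 f) {G C : ℝ} (hG : 0 < G)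
    (hgrad : ∀ x, G ≤ ‖gradient f x‖) (hC : ∀ x, ‖fderiv ℝ (gradient f) x‖ ≤ C) (x y : E) :
    ‖normalize (gradient f x) - normalize (gradient f y)‖ ≤ C / G * ‖x - y‖ :=
  calc ‖normalize (gradient f x) - normalize (gradient f y)‖
      ≤ ‖gradient f x - gradient f y‖ / G := norm_normalize_sub_normalize_le hG (hgrad x) (hgrad y)
    _ ≤ C * ‖x - y‖ / G := by gcongr; exact norm_gradient_sub_le hf hC x y
    _ = C / G * ‖x - y‖ := by ring

end InnerProduct

section Trajectory
variable {E : Type*} [NormedAddCommGroup E] [NormedSpace ℝ E] {x : ℕ → E} {v : ℕ → E → E}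
  {γ : ℝ}

theorem norm_sub_initial_le (hγ : 0 ≤ γ) (hx : ∀ m, x (m + 1) = x m - γ • v m (x m))
    (hv : ∀ m y, ‖v m y‖ ≤ 1) (m : ℕ) : ‖x m - x 0‖ ≤ m * γ := by
  induction m with
  | zero => simp
  | succ m ih =>
    calc ‖x (m + 1) - x 0‖ = ‖(x m - x 0) - γ • v m (x m)‖ := by rw [hx]; abel_nf
      _ ≤ ‖x m - x 0‖ + γ * ‖v m (x m)‖ := by
        grw [norm_sub_le, norm_smul, Real.norm_of_nonneg hγ]
      _ ≤ m * γ + γ * 1 := by gcongr; exact hv m _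
      _ = (m + 1 : ℕ) * γ := by push_cast; ring

theorem norm_sub_initial_add_frozen_sum_le (hγ : 0 ≤ γ)
    (hx : ∀ m, x (m + 1) = x m - γ • v m (x m)) (hv : ∀ m y, ‖v m y‖ ≤ 1) {C : ℝ} (hC : 0 ≤ C)
    (hvC : ∀ m y z, ‖v m y - v m z‖ ≤ C * ‖y - z‖) (m : ℕ) :
    ‖x m - x 0 + γ • ∑ l ∈ Finset.range m, v l (x 0)‖ ≤ C / 2 * (m * (m - 1)) * γ ^ 2 := by
  induction m with
  | zero => simp
  | succ m ih =>
    have hdrift : ‖v m (x 0) - v m (x m)‖ ≤ C * (m * γ) := by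
      grw [hvC, norm_sub_rev, norm_sub_initial_le hγ hx hv m]
    calc ‖x (m + 1) - x 0 + γ • ∑ l ∈ Finset.range (m + 1), v l (x 0)‖
        = ‖(x m - x 0 + γ • ∑ l ∈ Finset.range m, v l (x 0)) +
            γ • (v m (x 0) - v m (x m))‖ := by
          rw [hx, Finset.sum_range_succ, smul_add, smul_sub]; abel_nf
      _ ≤ C / 2 * (m * (m - 1)) * γ ^ 2 + γ * (C * (m * γ)) := by
        grw [norm_add_le, norm_smul, Real.norm_of_nonneg hγ, ih, hdrift]
      _ = C / 2 * ((m + 1 : ℕ) * ((m + 1 : ℕ) - 1)) * γ ^ 2 := by push_cast; ring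

end Trajectory

theorem nexusTraj_displacement_bounds_general {d K : ℕ}
    (L : Fin K → EuclideanSpace ℝ (Fin d) → ℝ)
    (hL : ∀ i, ContDiff ℝ 2 (L i))
    (Gmin Lc : ℝ) (hGmin : 0 < Gmin) (hLc : 0 ≤ Lc)
    (hgrad : ∀ i θ, Gmin ≤ ‖gradient (L i) θ‖)
    (hHess : ∀ i θ, ‖fderiv ℝ (gradient (L i)) θ‖ ≤ Lc)
    (θ0 : EuclideanSpace ℝ (Fin d)) (γ : ℝ) (hγ : 0 < γ)
    (s : ℕ → Fin K) (m : ℕ) :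
    ‖nexusTraj L γ θ0 s m - θ0‖ ≤ m * γ
    ∧ ‖nexusTraj L γ θ0 s m - θ0 +
          γ • ∑ l ∈ Finset.range m,
            ‖gradient (L (s l)) θ0‖⁻¹ • gradient (L (s l)) θ0‖
        ≤ (Lc / Gmin) / 2 * (m * (m - 1)) * γ ^ 2 := by
  have hstep : ∀ m, nexusTraj L γ θ0 s (m + 1) =
      nexusTraj L γ θ0 s m - γ • normalize (gradient (L (s m)) (nexusTraj L γ θ0 s m)) :=
    fun _ => rfl
  have hunit : ∀ (l : ℕ) θ, ‖normalize (gradient (L (s l)) θ)‖ ≤ 1 :=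
    fun _ _ => norm_normalize_le_one _
  have hlip : ∀ (l : ℕ) θ θ', ‖normalize (gradient (L (s l)) θ) -
      normalize (gradient (L (s l)) θ')‖ ≤ Lc / Gmin * ‖θ - θ'‖ :=
    fun l => norm_normalize_gradient_sub_le (hL (s l)) hGmin (hgrad (s l)) (hHess (s l))
  exact ⟨norm_sub_initial_le hγ.le hstep hunit m,
    norm_sub_initial_add_frozen_sum_le hγ.le hstep hunit (div_nonneg hLc hGmin.le) hlip m⟩

/-- **Displacement bounds for the Nexus inner trajectory.** Under a gradient norm lower
bound `G_min` and Hessian norm bound `L`, for each `m ≤ K`: (i) the trajectory moves at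
most `m γ` from its start, and (ii) it deviates from the idealized displacement (with all
normalized gradients frozen at `θ₀`) by at most `(L/G_min)/2 · m(m-1) γ²`. -/
theorem nexusTraj_displacement_bounds {d K : ℕ} (hK : 1 ≤ K)
    (L : Fin K → EuclideanSpace ℝ (Fin d) → ℝ)
    (hL : ∀ i, ContDiff ℝ 2 (L i))
    (Gmin Lc : ℝ) (hGmin : 0 < Gmin) (hLc : 0 ≤ Lc)
    (hgrad : ∀ i θ, Gmin ≤ ‖gradient (L i) θ‖)
    (hHess : ∀ i θ, ‖fderiv ℝ (gradient (L i)) θ‖ ≤ Lc)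
    (θ0 : EuclideanSpace ℝ (Fin d)) (γ : ℝ) (hγ : 0 < γ)
    (s : ℕ → Fin K) (m : ℕ) (hm : m ≤ K) :
    ‖nexusTraj L γ θ0 s m - θ0‖ ≤ m * γ
    ∧ ‖nexusTraj L γ θ0 s m - θ0 +
          γ • ∑ l ∈ Finset.range m,
            ‖gradient (L (s l)) θ0‖⁻¹ • gradient (L (s l)) θ0‖
        ≤ (Lc / Gmin) / 2 * (m * (m - 1)) * γ ^ 2 :=
  nexusTraj_displacement_bounds_general L hL Gmin Lc hGmin hLc hgrad hHess θ0 γ hγ s m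
end
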